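/- arXiv:math/0512470 — 3 statements merged into one kernel-verified Lean document; each statement's English description precedes it below -/
import Mathlib

section
/- Let W be a finite-dimensional real vector space with decomposition W = T ⊕ T* (a vector space and its dual) and pairing q((a₁,a₂),(b₁,b₂)) = -⟨a₁, b₂⟩ - ⟨a₂, b₁⟩. Let G be a positive definite symmetric bilinear form on T and B an alternating bilinear form on T, regarded as linear maps T → T*. Then W decomposes as the direct sum of C₊ = Graph(-G + B) and C₋ = Graph(G + B), this decomposition is orthogonal with respect to q, and q is positive definite on C₊ and negative definite on C₋. -/
/-- The pairing `q((a₁,a₂),(b₁,b₂)) = -⟨a₁,b₂⟩ - ⟨a₂,b₁⟩` on `T ⊕ T*`. -/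
def splitPairing (T : Type*) [AddCommGroup T] [Module ℝ T] :
    (T × Module.Dual ℝ T) → (T × Module.Dual ℝ T) → ℝ :=
  fun a b => -(b.2 a.1) - (a.2 b.1)

/-- `W = T ⊕ T*` decomposes as `C₊ ⊕ C₋` with `C₊ = Graph(-G+B)`, `C₋ = Graph(G+B)`;
the decomposition is `q`-orthogonal, `q` is positive definite on `C₊` and negative
definite on `C₋`. -/
theorem stmt6 (T : Type*) [AddCommGroup T] [Module ℝ T] [FiniteDimensional ℝ T]
    (G B : T →ₗ[ℝ] Module.Dual ℝ T)
    (hGsymm : ∀ v w, G v w = G w v)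
    (hGpos : ∀ v, v ≠ 0 → 0 < G v v)
    (hBalt : ∀ v w, B v w = - B w v) :
    IsCompl (LinearMap.range (LinearMap.prod LinearMap.id (-G + B)))
        (LinearMap.range (LinearMap.prod LinearMap.id (G + B))) ∧
    (∀ x ∈ LinearMap.range (LinearMap.prod LinearMap.id (-G + B)),
      ∀ y ∈ LinearMap.range (LinearMap.prod LinearMap.id (G + B)),
        splitPairing T x y = 0) ∧
    (∀ x ∈ LinearMap.range (LinearMap.prod LinearMap.id (-G + B)),
      x ≠ 0 → 0 < splitPairing T x x) ∧
    (∀ x ∈ LinearMap.range (LinearMap.prod LinearMap.id (G + B)),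
      x ≠ 0 → splitPairing T x x < 0) := by
  have hGinj : Function.Injective G := by
    rw [← LinearMap.ker_eq_bot, LinearMap.ker_eq_bot']
    intro v hv
    by_contra hv0
    have := hGpos v hv0
    rw [hv] at this
    simp at this
  have hGsurj : Function.Surjective G :=
    (LinearMap.injective_iff_surjective_of_finrank_eq_finrank
      (Subspace.dual_finrank_eq (K := ℝ) (V := T)).symm).mp hGinj
  have hBz : ∀ v, B v v = 0 := by
    intro v
    have := hBalt v v
    linarith
  refine ⟨⟨?_, ?_⟩, ?_, ?_, ?_⟩
  · rw [Submodule.disjoint_def]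
    rintro x ⟨a, rfl⟩ ⟨b, hb⟩
    simp only [LinearMap.prod_apply, LinearMap.id_coe, id_eq, Function.prod, Prod.mk.injEq] at hb
    obtain ⟨rfl, h2⟩ := hb
    simp only [LinearMap.add_apply, LinearMap.neg_apply] at h2
    have h3 : (2 : ℝ) • G b = 0 := by
      rw [two_smul]
      linear_combination (norm := module) h2
    have hb0 : b = 0 := hGinj (by
      have : G b = 0 := by
        have := congrArg (fun φ => (2:ℝ)⁻¹ • φ) h3
        simpa [smul_smul] using this
      simpa using this)
    simp [hb0]
  · rw [codisjoint_iff, eq_top_iff]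
    rintro ⟨v, φ⟩ -
    obtain ⟨c, hc⟩ := hGsurj ((2:ℝ)⁻¹ • (φ - B v))
    have key : ((2:ℝ)⁻¹ • v - c, (-G + B) ((2:ℝ)⁻¹ • v - c)) +
        ((2:ℝ)⁻¹ • v + c, (G + B) ((2:ℝ)⁻¹ • v + c)) = (v, φ) := by
      refine Prod.ext ?_ ?_
      · show ((2:ℝ)⁻¹ • v - c) + ((2:ℝ)⁻¹ • v + c) = v
        match_scalars <;> norm_num
      · show (-G + B) ((2:ℝ)⁻¹ • v - c) + (G + B) ((2:ℝ)⁻¹ • v + c) = φ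
        simp only [LinearMap.add_apply, LinearMap.neg_apply, map_sub, map_add, map_smul]
        linear_combination (norm := module) (2:ℝ) • hc
    exact key ▸ Submodule.add_mem_sup ⟨_, rfl⟩ ⟨_, rfl⟩
  · rintro x ⟨a, rfl⟩ y ⟨b, rfl⟩
    simp only [splitPairing, LinearMap.prod_apply, Function.prod, LinearMap.id_coe, id_eq,
      LinearMap.add_apply, LinearMap.neg_apply, LinearMap.sub_apply]
    have h1 := hGsymm a b
    have h2 := hBalt a b
    simp -failIfUnchanged only [LinearMap.add_apply, LinearMap.neg_apply, LinearMap.sub_apply] at h1 h2 ⊢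
    linarith
  · rintro x ⟨a, rfl⟩ hx
    have ha : a ≠ 0 := by
      rintro rfl
      simp at hx
    simp only [splitPairing, LinearMap.prod_apply, Function.prod, LinearMap.id_coe, id_eq,
      LinearMap.add_apply, LinearMap.neg_apply]
    have := hGpos a ha
    have := hBz a
    linarith
  · rintro x ⟨a, rfl⟩ hx
    have ha : a ≠ 0 := by
      rintro rfl
      simp at hx
    simp only [splitPairing, LinearMap.prod_apply, Function.prod, LinearMap.id_coe, id_eq,
      LinearMap.add_apply, LinearMap.neg_apply]
    have := hGpos a ha
    have := hBz a
    linarith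
end

section
/- Let A ∈ GL(g,ℝ) and ρ a symmetric negative definite integer g×g matrix. Define the 4g×4g block matrices 𝓘 = [[0,-A,0,0],[A⁻¹,0,0,0],[0,0,0,-A⁻ᵗ],[0,0,Aᵗ,0]] and 𝓙 = [[0,0,0,ρ⁻¹A⁻ᵗ],[0,0,-A⁻¹ρ⁻¹,0],[0,ρA,0,0],[-Aᵗρ,0,0,0]]. Then 𝓘² = -1, 𝓙² = -1, and 𝓘𝓙 = 𝓙𝓘. -/
/-!
Both `𝓘` and `𝓙` are assembled from `2 × 2` block matrices that are either block diagonal or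
off-diagonal `[[0, B], [C, 0]]`, and a product of two such matrices is again of one of these
shapes with blockwise products as entries. Each of the three identities therefore reduces to
cancellations `A A⁻¹ = 1`, `Aᵀ A⁻ᵀ = 1`, `ρ ρ⁻¹ = 1` between `g × g` blocks; `ρ` is invertible
because `-ρ` is positive definite.
-/

namespace Matrix

variable {l m n o p q α : Type*}

section Blocks

variable [Fintype l] [Fintype m] [NonUnitalNonAssocSemiring α]

theorem fromBlocks_offDiag_mul_offDiag (B : Matrix n m α) (C : Matrix o l α)
    (B' : Matrix l q α) (C' : Matrix m p α) :
    fromBlocks 0 B C 0 * fromBlocks 0 B' C' 0 = fromBlocks (B * C') 0 0 (C * B') := by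
  simp [fromBlocks_multiply]

theorem fromBlocks_diag_mul_diag (D : Matrix n l α) (E : Matrix o m α)
    (D' : Matrix l p α) (E' : Matrix m q α) :
    fromBlocks D 0 0 E * fromBlocks D' 0 0 E' = fromBlocks (D * D') 0 0 (E * E') := by
  simp [fromBlocks_multiply]

theorem fromBlocks_diag_mul_offDiag (D : Matrix n l α) (E : Matrix o m α)
    (B : Matrix l q α) (C : Matrix m p α) :
    fromBlocks D 0 0 E * fromBlocks 0 B C 0 = fromBlocks 0 (D * B) (E * C) 0 := by
  simp [fromBlocks_multiply]

theorem fromBlocks_offDiag_mul_diag (B : Matrix n m α) (C : Matrix o l α)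
    (D : Matrix l p α) (E : Matrix m q α) :
    fromBlocks 0 B C 0 * fromBlocks D 0 0 E = fromBlocks 0 (B * E) (C * D) 0 := by
  simp [fromBlocks_multiply]

end Blocks

section NegOne

variable [DecidableEq m] [DecidableEq n] [NonAssocRing α]

theorem fromBlocks_neg_one_zero_zero_neg_one :
    fromBlocks (-1 : Matrix m m α) 0 0 (-1 : Matrix n n α) = -1 := by
  rw [← fromBlocks_one, fromBlocks_neg, neg_zero, neg_zero]

variable [Fintype m] [Fintype n]

theorem fromBlocks_diag_mul_self_eq_neg_one {D : Matrix m m α} {E : Matrix n n α}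
    (hD : D * D = -1) (hE : E * E = -1) :
    fromBlocks D 0 0 E * fromBlocks D 0 0 E = -1 := by
  rw [fromBlocks_diag_mul_diag, hD, hE, fromBlocks_neg_one_zero_zero_neg_one]

theorem fromBlocks_offDiag_mul_self_eq_neg_one {B : Matrix m n α} {C : Matrix n m α}
    (hBC : B * C = -1) (hCB : C * B = -1) :
    fromBlocks 0 B C 0 * fromBlocks 0 B C 0 = -1 := by
  rw [fromBlocks_offDiag_mul_offDiag, hBC, hCB, fromBlocks_neg_one_zero_zero_neg_one]

end NegOne

theorem isUnit_det_of_neg_posDef {n K : Type*} [Fintype n] [DecidableEq n] [Field K]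
    [PartialOrder K] [StarRing K] {M : Matrix n n K} (hM : (-M).PosDef) : IsUnit M.det := by
  simpa [isUnit_iff_isUnit_det] using hM.isUnit.neg

end Matrix

open Matrix in
theorem stmt17_general (g : ℕ) (A ρ : Matrix (Fin g) (Fin g) ℝ)
    (hA : IsUnit A.det) (hρneg : (-ρ).PosDef) :
    let I : Matrix ((Fin g ⊕ Fin g) ⊕ (Fin g ⊕ Fin g))
        ((Fin g ⊕ Fin g) ⊕ (Fin g ⊕ Fin g)) ℝ :=
      Matrix.fromBlocks
        (Matrix.fromBlocks 0 (-A) A⁻¹ 0) 0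
        0 (Matrix.fromBlocks 0 (-(A⁻¹.transpose)) A.transpose 0)
    let J : Matrix ((Fin g ⊕ Fin g) ⊕ (Fin g ⊕ Fin g))
        ((Fin g ⊕ Fin g) ⊕ (Fin g ⊕ Fin g)) ℝ :=
      Matrix.fromBlocks
        0 (Matrix.fromBlocks 0 (ρ⁻¹ * A⁻¹.transpose) (-(A⁻¹ * ρ⁻¹)) 0)
        (Matrix.fromBlocks 0 (ρ * A) (-(A.transpose * ρ)) 0) 0
    I * I = -1 ∧ J * J = -1 ∧ I * J = J * I := by
  intro I J
  have := hA.invertible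
  have := (isUnit_det_of_neg_posDef hρneg).invertible
  have := A.invertibleOfDetInvertible
  have := ρ.invertibleOfDetInvertible
  refine ⟨?I_sq, ?J_sq, ?I_mul_J⟩
  case I_sq =>
    apply fromBlocks_diag_mul_self_eq_neg_one <;>
      apply fromBlocks_offDiag_mul_self_eq_neg_one <;>
      simp [transpose_nonsing_inv]
  case J_sq =>
    apply fromBlocks_offDiag_mul_self_eq_neg_one <;>
      rw [fromBlocks_offDiag_mul_offDiag, ← fromBlocks_neg_one_zero_zero_neg_one] <;>
      congr 1 <;> simp [transpose_nonsing_inv, Matrix.mul_assoc]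
  case I_mul_J =>
    simp only [I, J, fromBlocks_diag_mul_offDiag, fromBlocks_offDiag_mul_diag,
      fromBlocks_offDiag_mul_offDiag]
    congr 2 <;> simp [transpose_nonsing_inv, Matrix.mul_assoc]

/-- For `A ∈ GL(g,ℝ)` and `ρ` symmetric negative definite, the `4g×4g` block matrices
`𝓘 = [[0,-A,0,0],[A⁻¹,0,0,0],[0,0,0,-A⁻ᵗ],[0,0,Aᵗ,0]]` and
`𝓙 = [[0,0,0,ρ⁻¹A⁻ᵗ],[0,0,-A⁻¹ρ⁻¹,0],[0,ρA,0,0],[-Aᵗρ,0,0,0]]` satisfy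
`𝓘² = -1`, `𝓙² = -1` and `𝓘𝓙 = 𝓙𝓘`. -/
theorem stmt17 (g : ℕ) (hg : 0 < g) (A ρ : Matrix (Fin g) (Fin g) ℝ)
    (hA : IsUnit A.det) (hρsymm : ρ.transpose = ρ) (hρneg : (-ρ).PosDef) :
    let I : Matrix ((Fin g ⊕ Fin g) ⊕ (Fin g ⊕ Fin g))
        ((Fin g ⊕ Fin g) ⊕ (Fin g ⊕ Fin g)) ℝ :=
      Matrix.fromBlocks
        (Matrix.fromBlocks 0 (-A) A⁻¹ 0) 0
        0 (Matrix.fromBlocks 0 (-(A⁻¹.transpose)) A.transpose 0)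
    let J : Matrix ((Fin g ⊕ Fin g) ⊕ (Fin g ⊕ Fin g))
        ((Fin g ⊕ Fin g) ⊕ (Fin g ⊕ Fin g)) ℝ :=
      Matrix.fromBlocks
        0 (Matrix.fromBlocks 0 (ρ⁻¹ * A⁻¹.transpose) (-(A⁻¹ * ρ⁻¹)) 0)
        (Matrix.fromBlocks 0 (ρ * A) (-(A.transpose * ρ)) 0) 0
    I * I = -1 ∧ J * J = -1 ∧ I * J = J * I :=
  stmt17_general g A ρ hA hρneg
end

section
/- Let V be a finite-dimensional real vector space, G a positive definite symmetric bilinear form on V inducing G : V → V*, B : V → V* induced by an alternating form, and I : V → V a complex structure compatible with G and commuting appropriately, so that ω := G∘I (the Kähler form) is alternating and nondegenerate. Define on V ⊕ V* the maps 𝓘 = [[I, 0],[BI + IᵗB, -Iᵗ]] and 𝓙 = [[ω⁻¹B, -ω⁻¹],[ω + Bω⁻¹B, -Bω⁻¹]]. Then 𝓘² = -1, 𝓙² = -1, 𝓘𝓙 = 𝓙𝓘, and both 𝓘 and 𝓙 preserve the pairing q((a₁,a₂),(b₁,b₂)) = -⟨a₁,b₂⟩ - ⟨a₂,b₁⟩.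 -/
/-!
Both structures are B-field transforms `e^B ∘ J ∘ e^{-B}`, with `e^B (a, ξ) = (a, ξ + B a)`, of
the block structures `J_I = diag(I, -Iᵗ)` and `J_ω = [[0, -ω⁻¹], [ω, 0]]`. Conjugation preserves
squares and commutation, and `e^B` is an isometry of `q` because `B` is alternating, so everything
reduces to `J_I` and `J_ω`: there it comes down to `I² = -1`, `ω⁻¹ω = 1`, the antisymmetry of `ω`,
and `Iᵗ ∘ ω = -ω ∘ I`, which is the `I`-invariance of `G`.
-/

open Module (Dual)
open LinearMap (BilinForm IsOrthogonal)

namespace LinearMap.IsOrthogonal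

variable {R M : Type*} [CommRing R] [AddCommGroup M] [Module R M] {B : BilinForm R M}

theorem comp {f g : M → M} (hf : IsOrthogonal B f) (hg : IsOrthogonal B g) :
    IsOrthogonal B (f ∘ g) := fun x y => (hf (g x) (g y)).trans (hg x y)

theorem linearEquiv_symm {e : M ≃ₗ[R] M} (he : IsOrthogonal B e) : IsOrthogonal B e.symm :=
  fun x y => by simpa using (he (e.symm x) (e.symm y)).symm

theorem conj {e : M ≃ₗ[R] M} {f : Module.End R M} (he : IsOrthogonal B e)
    (hf : IsOrthogonal B f) : IsOrthogonal B (e.conj f) :=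
  he.comp (hf.comp he.linearEquiv_symm)

end LinearMap.IsOrthogonal

namespace GeneralizedComplex

variable {R V : Type*} [CommRing R] [AddCommGroup V] [Module R V]

variable (R V) in
def splitPairing : BilinForm R (V × Dual R V) :=
  -(LinearMap.dualProd R V).compl₁₂ (LinearEquiv.prodComm R V (Dual R V)).toLinearMap
    (LinearEquiv.prodComm R V (Dual R V)).toLinearMap

@[simp]
theorem splitPairing_apply (x y : V × Dual R V) :
    splitPairing R V x y = -(y.2 x.1) - x.2 y.1 := by
  simp only [splitPairing, LinearMap.dualProd, LinearMap.neg_apply, LinearMap.compl₁₂_apply,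
    LinearEquiv.coe_coe, LinearEquiv.prodComm_apply, LinearMap.add_apply, LinearMap.compl₂_apply,
    LinearMap.coe_comp, LinearMap.coe_snd, Function.comp_apply, Prod.snd_swap,
    LinearMap.fst_apply, Prod.fst_swap, LinearMap.applyₗ_apply_apply, LinearMap.flip_apply]
  ring

def bTransform (B : V →ₗ[R] Dual R V) : (V × Dual R V) ≃ₗ[R] V × Dual R V :=
  (LinearEquiv.refl R V).skewProd (LinearEquiv.refl R (Dual R V)) B

section BTransform

variable {B : V →ₗ[R] Dual R V}

@[simp]
theorem bTransform_apply (x : V × Dual R V) : bTransform B x = (x.1, x.2 + B x.1) := rfl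

@[simp]
theorem bTransform_symm_apply (x : V × Dual R V) :
    (bTransform B).symm x = (x.1, x.2 - B x.1) := rfl

theorem isOrthogonal_bTransform (hB : ∀ v w, B v w = -B w v) :
    IsOrthogonal (splitPairing R V) (bTransform B) := by
  rintro ⟨a, ξ⟩ ⟨b, η⟩
  simp only [bTransform_apply, splitPairing_apply, LinearMap.add_apply, hB b a]
  ring

end BTransform

def complexGCS (I : Module.End R V) : Module.End R (V × Dual R V) :=
  I.prodMap (-I.dualMap)

section Complex

variable {I : Module.End R V}

@[simp]
theorem complexGCS_apply (x : V × Dual R V) : complexGCS I x = (I x.1, -I.dualMap x.2) := rfl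

theorem complexGCS_comp_self (hI : ∀ v, I (I v) = -v) :
    complexGCS I ∘ₗ complexGCS I = -LinearMap.id := by
  refine LinearMap.ext fun x => Prod.ext ?_ ?_
  · simp [hI]
  · ext w
    simp [hI]

theorem isOrthogonal_complexGCS (hI : ∀ v, I (I v) = -v) :
    IsOrthogonal (splitPairing R V) (complexGCS I) := by
  rintro ⟨a, ξ⟩ ⟨b, η⟩
  simp [hI]

theorem conj_bTransform_complexGCS_apply (B : V →ₗ[R] Dual R V) (a : V) (ξ : Dual R V) :
    (bTransform B).conj (complexGCS I) (a, ξ) =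
      (I a, B (I a) + I.dualMap (B a) - I.dualMap ξ) := by
  simp only [LinearEquiv.conj_apply_apply, bTransform_symm_apply, complexGCS_apply,
    bTransform_apply, map_sub]
  abel_nf

end Complex

def symplecticGCS (ω : V ≃ₗ[R] Dual R V) : Module.End R (V × Dual R V) :=
  (-(ω.symm.toLinearMap ∘ₗ LinearMap.snd R V (Dual R V))).prod
    (ω.toLinearMap ∘ₗ LinearMap.fst R V (Dual R V))

section Symplectic

variable {ω : V ≃ₗ[R] Dual R V}

@[simp]
theorem symplecticGCS_apply (x : V × Dual R V) : symplecticGCS ω x = (-ω.symm x.2, ω x.1) := rfl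

theorem symplecticGCS_comp_self : symplecticGCS ω ∘ₗ symplecticGCS ω = -LinearMap.id :=
  LinearMap.ext fun x => Prod.ext (by simp) (by simp)

theorem isOrthogonal_symplecticGCS (hω : ∀ v w, ω v w = -ω w v) :
    IsOrthogonal (splitPairing R V) (symplecticGCS ω) := by
  rintro ⟨a, ξ⟩ ⟨b, η⟩
  simp only [symplecticGCS_apply, splitPairing_apply, hω b, hω a, map_neg,
    LinearEquiv.apply_symm_apply, LinearMap.neg_apply]
  ring

theorem complexGCS_comp_symplecticGCS {I : Module.End R V}
    (hIω : ∀ v w, ω v (I w) = -ω (I v) w) :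
    complexGCS I ∘ₗ symplecticGCS ω = symplecticGCS ω ∘ₗ complexGCS I := by
  have hdual (v : V) : I.dualMap (ω v) = -ω (I v) := by ext w; simp [hIω]
  have hsymm (ξ : Dual R V) : I (ω.symm ξ) = -ω.symm (I.dualMap ξ) :=
    calc I (ω.symm ξ) = -ω.symm (I.dualMap (ω (ω.symm ξ))) := by
          rw [hdual, map_neg, ω.symm_apply_apply, neg_neg]
      _ = -ω.symm (I.dualMap ξ) := by rw [ω.apply_symm_apply]
  exact LinearMap.ext fun x => by simp [hdual, hsymm]

theorem conj_bTransform_symplecticGCS_apply (B : V →ₗ[R] Dual R V) (a : V) (ξ : Dual R V) :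
    (bTransform B).conj (symplecticGCS ω) (a, ξ) =
      (ω.symm (B a) - ω.symm ξ, ω a + B (ω.symm (B a) - ω.symm ξ)) := by
  simp

end Symplectic

section Kahler

variable {I : Module.End R V} {G ω : V →ₗ[R] Dual R V}

theorem kahlerForm_apply_map_eq_neg_map_apply (hω : ∀ v w, ω v w = G v (I w))
    (hI : ∀ v, I (I v) = -v)
    (hGI : ∀ v w, G (I v) (I w) = G v w) (v w : V) : ω v (I w) = -ω (I v) w := by
  rw [hω, hω, hGI, hI, map_neg]

theorem kahlerForm_antisymm (hω : ∀ v w, ω v w = G v (I w)) (hI : ∀ v, I (I v) = -v)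
    (hGsymm : ∀ v w, G v w = G w v)
    (hGI : ∀ v w, G (I v) (I w) = G v w) (v w : V) : ω v w = -ω w v :=
  calc ω v w = G (I v) (I (I w)) := by rw [hω, hGI]
    _ = -ω w v := by rw [hI, map_neg, hGsymm, hω]

end Kahler

end GeneralizedComplex

open GeneralizedComplex in
theorem stmt19_general (V : Type*) [AddCommGroup V] [Module ℝ V]
    (I : V →ₗ[ℝ] V) (hI : I ∘ₗ I = -LinearMap.id)
    (G : V →ₗ[ℝ] Module.Dual ℝ V)
    (hGsymm : ∀ v w, G v w = G w v)
    (hGI : ∀ v w, G (I v) (I w) = G v w)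
    (B : V →ₗ[ℝ] Module.Dual ℝ V) (hB : ∀ v w, B v w = - B w v)
    (ω : V →ₗ[ℝ] Module.Dual ℝ V) (hω : ∀ v w, ω v w = G v (I w))
    (ωinv : Module.Dual ℝ V →ₗ[ℝ] V)
    (hω1 : ωinv ∘ₗ ω = LinearMap.id) (hω2 : ω ∘ₗ ωinv = LinearMap.id)
    (𝓘 𝓙 : (V × Module.Dual ℝ V) →ₗ[ℝ] (V × Module.Dual ℝ V))
    (h𝓘 : ∀ (a : V) (ξ : Module.Dual ℝ V),
      𝓘 (a, ξ) = (I a, B (I a) + I.dualMap (B a) - I.dualMap ξ))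
    (h𝓙 : ∀ (a : V) (ξ : Module.Dual ℝ V),
      𝓙 (a, ξ) = (ωinv (B a) - ωinv ξ, ω a + B (ωinv (B a) - ωinv ξ))) :
    𝓘 ∘ₗ 𝓘 = -LinearMap.id ∧
    𝓙 ∘ₗ 𝓙 = -LinearMap.id ∧
    𝓘 ∘ₗ 𝓙 = 𝓙 ∘ₗ 𝓘 ∧
    (∀ x y : V × Module.Dual ℝ V,
      -((𝓘 y).2 ((𝓘 x).1)) - ((𝓘 x).2 ((𝓘 y).1)) = -(y.2 x.1) - (x.2 y.1)) ∧
    (∀ x y : V × Module.Dual ℝ V,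
      -((𝓙 y).2 ((𝓙 x).1)) - ((𝓙 x).2 ((𝓙 y).1)) = -(y.2 x.1) - (x.2 y.1)) := by
  have hI' (v : V) : I (I v) = -v := LinearMap.congr_fun hI v
  let ωe : V ≃ₗ[ℝ] Module.Dual ℝ V := .ofLinearMap ω ωinv hω2 hω1
  obtain rfl : 𝓘 = (bTransform B).conj (complexGCS I) :=
    LinearMap.ext fun x => by rw [h𝓘, conj_bTransform_complexGCS_apply]
  obtain rfl : 𝓙 = (bTransform B).conj (symplecticGCS ωe) :=
    LinearMap.ext fun x => by rw [h𝓙, conj_bTransform_symplecticGCS_apply]; rfl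
  have hBq := isOrthogonal_bTransform hB
  refine ⟨?_, ?_, ?_, fun x y => ?_, fun x y => ?_⟩
  · rw [← LinearEquiv.conj_comp, complexGCS_comp_self hI', map_neg (bTransform B).conj,
      LinearEquiv.conj_id]
  · rw [← LinearEquiv.conj_comp, symplecticGCS_comp_self, map_neg (bTransform B).conj,
      LinearEquiv.conj_id]
  · rw [← LinearEquiv.conj_comp, ← LinearEquiv.conj_comp,
      complexGCS_comp_symplecticGCS (kahlerForm_apply_map_eq_neg_map_apply hω hI' hGI)]
  · simpa using hBq.conj (isOrthogonal_complexGCS hI') x y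
  · have hωanti := kahlerForm_antisymm hω hI' hGsymm hGI
    simpa using hBq.conj (isOrthogonal_symplecticGCS hωanti) x y

/-- Given a complex torus datum `(V, I, G, B)` with Kähler form `ω = G(·, I·)`
(invertible as a map `V → V*` with inverse `ωinv`), the generalized complex structures
`𝓘 = [[I, 0],[BI + IᵗB, -Iᵗ]]` and `𝓙 = [[ω⁻¹B, -ω⁻¹],[ω + Bω⁻¹B, -Bω⁻¹]]` on
`V ⊕ V*` satisfy `𝓘² = -1`, `𝓙² = -1`, `𝓘𝓙 = 𝓙𝓘`, and both preserve the split
pairing `q((a₁,a₂),(b₁,b₂)) = -⟨a₁,b₂⟩ - ⟨a₂,b₁⟩`. -/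
theorem stmt19 (V : Type*) [AddCommGroup V] [Module ℝ V] [FiniteDimensional ℝ V]
    (I : V →ₗ[ℝ] V) (hI : I ∘ₗ I = -LinearMap.id)
    (G : V →ₗ[ℝ] Module.Dual ℝ V)
    (hGsymm : ∀ v w, G v w = G w v)
    (hGpos : ∀ v, v ≠ 0 → 0 < G v v)
    (hGI : ∀ v w, G (I v) (I w) = G v w)
    (B : V →ₗ[ℝ] Module.Dual ℝ V) (hB : ∀ v w, B v w = - B w v)
    (ω : V →ₗ[ℝ] Module.Dual ℝ V) (hω : ∀ v w, ω v w = G v (I w))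
    (ωinv : Module.Dual ℝ V →ₗ[ℝ] V)
    (hω1 : ωinv ∘ₗ ω = LinearMap.id) (hω2 : ω ∘ₗ ωinv = LinearMap.id)
    (𝓘 𝓙 : (V × Module.Dual ℝ V) →ₗ[ℝ] (V × Module.Dual ℝ V))
    (h𝓘 : ∀ (a : V) (ξ : Module.Dual ℝ V),
      𝓘 (a, ξ) = (I a, B (I a) + I.dualMap (B a) - I.dualMap ξ))
    (h𝓙 : ∀ (a : V) (ξ : Module.Dual ℝ V),
      𝓙 (a, ξ) = (ωinv (B a) - ωinv ξ, ω a + B (ωinv (B a) - ωinv ξ))) :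
    𝓘 ∘ₗ 𝓘 = -LinearMap.id ∧
    𝓙 ∘ₗ 𝓙 = -LinearMap.id ∧
    𝓘 ∘ₗ 𝓙 = 𝓙 ∘ₗ 𝓘 ∧
    (∀ x y : V × Module.Dual ℝ V,
      -((𝓘 y).2 ((𝓘 x).1)) - ((𝓘 x).2 ((𝓘 y).1)) = -(y.2 x.1) - (x.2 y.1)) ∧
    (∀ x y : V × Module.Dual ℝ V,
      -((𝓙 y).2 ((𝓙 x).1)) - ((𝓙 x).2 ((𝓙 y).1)) = -(y.2 x.1) - (x.2 y.1)) :=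
  stmt19_general V I hI G hGsymm hGI B hB ω hω ωinv hω1 hω2 𝓘 𝓙 h𝓘 h𝓙
end
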